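/- Let θ ∈ {0,1/2}, and let ε be a complex number satisfying either Re ε > 0 and ε⁻¹ ∉ ℤ, or Re ε = 0 and Im ε > 0. Define for m,n ∈ ℤ and r,s ∈ ℤ+θ: f(m,n) = −n(1+εn)/(1+ε(m+n)), g(m,r) = −(m/2+r)(1+2εr)/(1+2ε(m+r)), h(r,m) = −m(1+εm)/(1+2ε(m+r)), d(r,s) = (1+2εs)/(1+ε(r+s)), φ(m,n) = (1/24)(m³−m+(ε−ε⁻¹)m²)·δ_{m+n,0}. Suppose ψ: ℤ×(ℤ+θ) → ℂ, ρ: (ℤ+θ)×ℤ → ℂ, σ: (ℤ+θ)×(ℤ+θ) → ℂ satisfy, for all m,n ∈ ℤ and r,s,t ∈ ℤ+θ: σ(r,s) + σ(s,r) = (1/12)(4r²−1)δ_{r+s,0}; ψ(m,r) = ρ(r,m); (m−n)ψ(m+n,r) = g(n,r)ψ(m,n+r) − g(m,r)ψ(n,m+r); (m/2−r)ρ(m+r,n) = h(r,n)ψ(m,n+r) − f(m,n)ρ(r,m+n); (m/2−r)σ(m+r,s) = d(r,s)φ(m,r+s) − g(m,s)σ(r,m+s); 2φ(r+s,m) = h(s,m)σ(r,m+s)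 + h(r,m)σ(s,m+r); 2ψ(r+s,t) = d(s,t)ρ(r,s+t) + d(r,t)ρ(s,r+t). Then necessarily ψ(m,r) = 0, ρ(r,m) = 0, and σ(r,s) = (1/24)(4r²−1+2(ε−ε⁻¹)r)·δ_{r+s,0} for all m ∈ ℤ and r,s ∈ ℤ+θ. -/

import Mathlib

/-!
Specialising the cocycle identities at the index `0` makes the structure constants degenerate:
`g(0,r) = -r`, `h(r,0) = f(0,0) = 0` and `φ(0,·) = 0`. This gives `(r + s) σ(r,s) = 0` and
`(m + r) ψ(m,r) = -g(m,r) ψ(0,m+r)` with `ψ(0,x) = 0` for `x ≠ 0`, so `ψ` and `σ` are supported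
on the antidiagonal. There, (4.13) at `(m,0,-m)` and `(-m,0,m)` is a homogeneous `2 × 2` system
for `ψ(m,-m)`, `ψ(-m,m)` whose determinant is a nonzero multiple of `3`, while (4.7), (4.11) and
(4.12) at `m = 1` are linear in `σ(r,-r)`, `σ(1+r,-1-r)`, `σ(-1-r,1+r)`; eliminating the last two
leaves `48 ε (1 - 4εr(1+r)) σ(r,-r)` equal to a known quantity. The condition on `ε` makes every
denominator `1 + εk`, and this coefficient, nonzero.
-/

/-- membership in ℤ + θ -/
def InZT (θ x : ℂ) : Prop := ∃ k : ℤ, x = (k : ℂ) + θ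

/-- f(m,n) = −n(1+εn)/(1+ε(m+n)) -/
noncomputable def vf (ε m n : ℂ) : ℂ := -n * (1 + ε * n) / (1 + ε * (m + n))

/-- g(m,r) = −(m/2+r)(1+2εr)/(1+2ε(m+r)) -/
noncomputable def vg (ε m r : ℂ) : ℂ :=
  -(m / 2 + r) * (1 + 2 * ε * r) / (1 + 2 * ε * (m + r))

/-- h(r,m) = −m(1+εm)/(1+2ε(m+r)) -/
noncomputable def vh (ε r m : ℂ) : ℂ := -m * (1 + ε * m) / (1 + 2 * ε * (m + r))

/-- d(r,s) = (1+2εs)/(1+ε(r+s)) -/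
noncomputable def vd (ε r s : ℂ) : ℂ := (1 + 2 * ε * s) / (1 + ε * (r + s))

/-- φ(m,n) = (1/24)(m³−m+(ε−ε⁻¹)m²)δ_{m+n,0} -/
noncomputable def vphi (ε m n : ℂ) : ℂ :=
  (1 / 24) * (m ^ 3 - m + (ε - ε⁻¹) * m ^ 2) * (if m + n = 0 then 1 else 0)

namespace InZT

variable {θ x y : ℂ}

theorem intCast_add (hx : InZT θ x) (n : ℤ) : InZT θ (n + x) := by
  obtain ⟨k, rfl⟩ := hx
  exact ⟨n + k, by push_cast; ring⟩

theorem neg (hθ : θ = 0 ∨ θ = 1 / 2) (hx : InZT θ x) : InZT θ (-x) := by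
  obtain ⟨k, rfl⟩ := hx
  rcases hθ with rfl | rfl
  · exact ⟨-k, by push_cast; ring⟩
  · exact ⟨-k - 1, by push_cast; ring⟩

theorem exists_add_eq_intCast (hθ : θ = 0 ∨ θ = 1 / 2) (hx : InZT θ x) (hy : InZT θ y) :
    ∃ j : ℤ, x + y = j := by
  obtain ⟨k, rfl⟩ := hx
  obtain ⟨l, rfl⟩ := hy
  rcases hθ with rfl | rfl
  · exact ⟨k + l, by push_cast; ring⟩
  · exact ⟨k + l + 1, by push_cast; ring⟩

theorem neg_one_sub (hθ : θ = 0 ∨ θ = 1 / 2) (hx : InZT θ x) : InZT θ (-1 - x) := by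
  convert (hx.neg hθ).intCast_add (-1) using 1
  push_cast
  ring

end InZT

section Parameter

variable {θ ε : ℂ}

theorem ne_zero_of_admissible
    (hε : (0 < ε.re ∧ ∀ k : ℤ, ε⁻¹ ≠ (k : ℂ)) ∨ (ε.re = 0 ∧ 0 < ε.im)) : ε ≠ 0 := by
  rintro rfl
  simp at hε

theorem one_add_mul_intCast_ne_zero
    (hε : (0 < ε.re ∧ ∀ k : ℤ, ε⁻¹ ≠ (k : ℂ)) ∨ (ε.re = 0 ∧ 0 < ε.im)) (j : ℤ) :
    1 + ε * j ≠ 0 := by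
  intro h
  rcases hε with ⟨-, hinv⟩ | ⟨hre, -⟩
  · refine hinv (-j) (inv_eq_of_mul_eq_one_right ?_)
    push_cast
    linear_combination -h
  · simpa [hre] using congrArg Complex.re h

theorem one_add_mul_add_ne_zero (hε : ∀ j : ℤ, 1 + ε * j ≠ 0) (hθ : θ = 0 ∨ θ = 1 / 2)
    {x y : ℂ} (hx : InZT θ x) (hy : InZT θ y) : 1 + ε * (x + y) ≠ 0 := by
  obtain ⟨j, hj⟩ := hx.exists_add_eq_intCast hθ hy
  rw [hj]
  exact hε j

theorem one_add_two_mul_ne_zero (hε : ∀ j : ℤ, 1 + ε * j ≠ 0) (hθ : θ = 0 ∨ θ = 1 / 2)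
    {x : ℂ} (hx : InZT θ x) : 1 + 2 * ε * x ≠ 0 := by
  rw [show 2 * ε * x = ε * (x + x) by ring]
  exact one_add_mul_add_ne_zero hε hθ hx hx

end Parameter

section StructureConstants

variable {θ ε : ℂ}

theorem vd_mul_denom (hε : ∀ j : ℤ, 1 + ε * j ≠ 0) (hθ : θ = 0 ∨ θ = 1 / 2) {r s : ℂ}
    (hr : InZT θ r) (hs : InZT θ s) : vd ε r s * (1 + ε * (r + s)) = 1 + 2 * ε * s :=
  div_mul_cancel₀ _ (one_add_mul_add_ne_zero hε hθ hr hs)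

theorem vg_mul_denom (hε : ∀ j : ℤ, 1 + ε * j ≠ 0) (hθ : θ = 0 ∨ θ = 1 / 2) {m r : ℂ}
    (h : InZT θ (m + r)) : vg ε m r * (1 + 2 * ε * (m + r)) = -(m / 2 + r) * (1 + 2 * ε * r) :=
  div_mul_cancel₀ _ (one_add_two_mul_ne_zero hε hθ h)

theorem vh_mul_denom (hε : ∀ j : ℤ, 1 + ε * j ≠ 0) (hθ : θ = 0 ∨ θ = 1 / 2) {r m : ℂ}
    (h : InZT θ (m + r)) : vh ε r m * (1 + 2 * ε * (m + r)) = -m * (1 + ε * m) :=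
  div_mul_cancel₀ _ (one_add_two_mul_ne_zero hε hθ h)

theorem vg_zero_left (hε : ∀ j : ℤ, 1 + ε * j ≠ 0) (hθ : θ = 0 ∨ θ = 1 / 2) {r : ℂ}
    (hr : InZT θ r) : vg ε 0 r = -r := by
  have h := one_add_two_mul_ne_zero hε hθ hr
  rw [vg, zero_add, div_eq_iff h]
  ring

theorem vphi_of_add_eq_zero {m n : ℂ} (h : m + n = 0) :
    vphi ε m n = (1 / 24) * (m ^ 3 - m + (ε - ε⁻¹) * m ^ 2) := by
  rw [vphi, if_pos h, mul_one]

end StructureConstants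

/- Equations (4.7)–(4.13) of the paper. `L` stands for the `ℤ`-indexed and `G` for the
`(ℤ + θ)`-indexed generators: each identity comes from the Jacobi triple its name spells. -/

section Cocycle

variable (θ ε : ℂ) (ψ ρ σ : ℂ → ℂ → ℂ)

def SigmaSuperSymm : Prop :=
  ∀ r s : ℂ, InZT θ r → InZT θ s →
    σ r s + σ s r = (1 / 12) * (4 * r ^ 2 - 1) * (if r + s = 0 then 1 else 0)

def PsiEqRhoSwap : Prop :=
  ∀ (m : ℤ) (r : ℂ), InZT θ r → ψ m r = ρ r m

def CocycleLLG : Prop :=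
  ∀ (m n : ℤ) (r : ℂ), InZT θ r →
    ((m : ℂ) - (n : ℂ)) * ψ ((m : ℂ) + (n : ℂ)) r
      = vg ε n r * ψ m ((n : ℂ) + r) - vg ε m r * ψ n ((m : ℂ) + r)

def CocycleLGL : Prop :=
  ∀ (m n : ℤ) (r : ℂ), InZT θ r →
    ((m : ℂ) / 2 - r) * ρ ((m : ℂ) + r) n
      = vh ε r n * ψ m ((n : ℂ) + r) - vf ε m n * ρ r ((m : ℂ) + (n : ℂ))

def CocycleLGG : Prop :=
  ∀ (m : ℤ) (r s : ℂ), InZT θ r → InZT θ s →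
    ((m : ℂ) / 2 - r) * σ ((m : ℂ) + r) s
      = vd ε r s * vphi ε m (r + s) - vg ε m s * σ r ((m : ℂ) + s)

def CocycleGGL : Prop :=
  ∀ (m : ℤ) (r s : ℂ), InZT θ r → InZT θ s →
    2 * vphi ε (r + s) m
      = vh ε s m * σ r ((m : ℂ) + s) + vh ε r m * σ s ((m : ℂ) + r)

def CocycleGGG : Prop :=
  ∀ r s t : ℂ, InZT θ r → InZT θ s → InZT θ t →
    2 * ψ (r + s) t = vd ε s t * ρ r (s + t) + vd ε r t * ρ s (r + t)

end Cocycle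

section Psi

variable {θ ε : ℂ} {ψ ρ : ℂ → ℂ → ℂ}

theorem psi_zero_left_eq_zero (hpr : PsiEqRhoSwap θ ψ ρ) (h10 : CocycleLGL θ ε ψ ρ) {x : ℂ}
    (hx : InZT θ x) (hx0 : x ≠ 0) : ψ 0 x = 0 := by
  have e := h10 0 0 x hx
  simp only [vh, vf, Int.cast_zero, zero_div, zero_sub, zero_add, neg_zero, zero_mul,
    sub_zero] at e
  have hψρ := hpr 0 x hx
  rw [Int.cast_zero] at hψρ
  rw [hψρ]
  exact (mul_eq_zero.mp e).resolve_left (neg_ne_zero.mpr hx0)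

theorem add_mul_psi_eq (hε : ∀ j : ℤ, 1 + ε * j ≠ 0) (hθ : θ = 0 ∨ θ = 1 / 2)
    (h9 : CocycleLLG θ ε ψ) (m : ℤ) {x : ℂ} (hx : InZT θ x) :
    (m + x) * ψ m x = -(vg ε m x * ψ 0 (m + x)) := by
  have e := h9 m 0 x hx
  simp only [Int.cast_zero, sub_zero, add_zero, zero_add, vg_zero_left hε hθ hx] at e
  linear_combination e

theorem psi_eq_zero_of_add_ne_zero (hε : ∀ j : ℤ, 1 + ε * j ≠ 0) (hθ : θ = 0 ∨ θ = 1 / 2)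
    (hpr : PsiEqRhoSwap θ ψ ρ) (h9 : CocycleLLG θ ε ψ) (h10 : CocycleLGL θ ε ψ ρ) (m : ℤ)
    {x : ℂ} (hx : InZT θ x) (hmx : (m : ℂ) + x ≠ 0) : ψ m x = 0 := by
  have e := add_mul_psi_eq hε hθ h9 m hx
  rw [psi_zero_left_eq_zero hpr h10 (hx.intCast_add m) hmx, mul_zero, neg_zero] at e
  exact (mul_eq_zero.mp e).resolve_left hmx

theorem psi_zero_zero (hε : ∀ j : ℤ, 1 + ε * j ≠ 0) (hθ : θ = 0 ∨ θ = 1 / 2)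
    (h9 : CocycleLLG θ ε ψ) (hℤ : ∀ n : ℤ, InZT θ n) : ψ 0 0 = 0 := by
  have e := add_mul_psi_eq hε hθ h9 1 (x := -1) (by exact_mod_cast hℤ (-1))
  have hg := vg_mul_denom hε hθ (m := 1) (r := -1) (by norm_num; exact_mod_cast hℤ 0)
  have h2 : (1 : ℂ) - 2 * ε ≠ 0 := by convert hε (-2) using 1; push_cast; ring
  norm_num at e hg
  exact e.resolve_left fun hg0 => h2 (by linear_combination 2 * hg0 - 2 * hg)

theorem psi_antidiag_eq_zero (hε : ∀ j : ℤ, 1 + ε * j ≠ 0) (hθ : θ = 0 ∨ θ = 1 / 2)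
    (hpr : PsiEqRhoSwap θ ψ ρ) (h13 : CocycleGGG θ ε ψ ρ) (h00 : ψ 0 0 = 0)
    (hℤ : ∀ n : ℤ, InZT θ n) (m : ℤ) : ψ m (-m) = 0 := by
  have hm := hℤ m
  have hnm : InZT θ (-m) := by exact_mod_cast hℤ (-m)
  have h0 : InZT θ 0 := by exact_mod_cast hℤ 0
  have e1 := h13 m 0 (-m) hm h0 hnm
  have e2 := h13 (-m) 0 m hnm h0 hm
  have hρ1 := hpr (-m) m hm
  have hρ2 := hpr m (-m) hnm
  have hρ0 := hpr 0 0 h0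
  push_cast at hρ1 hρ0
  simp only [add_zero, zero_add, add_neg_cancel, neg_add_cancel, ← hρ0, ← hρ1, ← hρ2, h00,
    mul_zero] at e1 e2
  have hd1 := vd_mul_denom hε hθ h0 hnm
  have hd2 := vd_mul_denom hε hθ h0 hm
  have h3 : (3 : ℂ) * ψ m (-m) = 0 := by
    linear_combination (2 * (1 + ε * m)) * ((1 - ε * m) * e1 + ψ (-m) m * hd1)
      + (1 - 2 * ε * m) * ((1 + ε * m) * e2 + ψ m (-m) * hd2)
  simpa using h3

theorem psi_eq_zero (hε : ∀ j : ℤ, 1 + ε * j ≠ 0) (hθ : θ = 0 ∨ θ = 1 / 2)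
    (hpr : PsiEqRhoSwap θ ψ ρ) (h9 : CocycleLLG θ ε ψ) (h10 : CocycleLGL θ ε ψ ρ)
    (h13 : CocycleGGG θ ε ψ ρ) (m : ℤ) {x : ℂ} (hx : InZT θ x) : ψ m x = 0 := by
  by_cases hmx : (m : ℂ) + x = 0
  · obtain rfl : x = -m := eq_neg_of_add_eq_zero_right hmx
    have hℤ : ∀ n : ℤ, InZT θ n := fun n => by
      convert hx.intCast_add (n + m) using 1
      push_cast
      ring
    exact psi_antidiag_eq_zero hε hθ hpr h13 (psi_zero_zero hε hθ h9 hℤ) hℤ m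
  · exact psi_eq_zero_of_add_ne_zero hε hθ hpr h9 h10 m hx hmx

end Psi

section Sigma

variable {θ ε : ℂ} {σ : ℂ → ℂ → ℂ}

theorem sigma_eq_zero_of_add_ne_zero (hε : ∀ j : ℤ, 1 + ε * j ≠ 0) (hθ : θ = 0 ∨ θ = 1 / 2)
    (h11 : CocycleLGG θ ε σ) {r s : ℂ} (hr : InZT θ r) (hs : InZT θ s) (hrs : r + s ≠ 0) :
    σ r s = 0 := by
  have e := h11 0 r s hr hs
  simp only [vphi, Int.cast_zero, zero_div, zero_sub, zero_add, vg_zero_left hε hθ hs] at e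
  norm_num at e
  have h : (r + s) * σ r s = 0 := by linear_combination -e
  exact (mul_eq_zero.mp h).resolve_left hrs

theorem CocycleLGG.antidiag_one (hε : ∀ j : ℤ, 1 + ε * j ≠ 0) (hθ : θ = 0 ∨ θ = 1 / 2)
    (hε0 : ε ≠ 0) (h11 : CocycleLGG θ ε σ) {r : ℂ} (hr : InZT θ r) :
    24 * ε * (1 - 2 * r) * (1 - 2 * ε * r) * σ (1 + r) (-1 - r)
      = -2 * (1 + ε) * (1 - 2 * ε * (1 + r)) * (1 - 2 * ε * r)
        - 24 * ε * (1 + 2 * r) * (1 - 2 * ε * (1 + r)) * σ r (-r) := by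
  have hs := hr.neg_one_sub hθ
  have hs' : InZT θ (1 + (-1 - r)) := by
    convert hr.neg hθ using 1; ring
  have e := h11 1 r (-1 - r) hr hs
  rw [Int.cast_one, vphi_of_add_eq_zero (by ring), show (1 : ℂ) + (-1 - r) = -r by ring] at e
  have hd := vd_mul_denom hε hθ hr hs
  have hg := vg_mul_denom hε hθ hs'
  linear_combination 48 * ε * (1 - 2 * ε * r) * e - 48 * ε * σ r (-r) * hg
    - 2 * (1 - 2 * ε * r) * vd ε r (-1 - r) * mul_inv_cancel₀ hε0
    - 2 * (1 - 2 * ε * r) * (1 + ε) * hd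

theorem CocycleGGL.antidiag_one (hε : ∀ j : ℤ, 1 + ε * j ≠ 0) (hθ : θ = 0 ∨ θ = 1 / 2)
    (hε0 : ε ≠ 0) (h12 : CocycleGGL θ ε σ) {r : ℂ} (hr : InZT θ r) :
    12 * ε * ((1 + 2 * ε * (1 + r)) * σ r (-r) + (1 - 2 * ε * r) * σ (-1 - r) (1 + r))
      = (1 - ε) * (1 - 2 * ε * r) * (1 + 2 * ε * (1 + r)) := by
  have hs := hr.neg_one_sub hθ
  have hs' : InZT θ (1 + (-1 - r)) := by
    convert hr.neg hθ using 1; ring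
  have e := h12 1 r (-1 - r) hr hs
  rw [Int.cast_one, vphi_of_add_eq_zero (by ring), show (1 : ℂ) + (-1 - r) = -r by ring,
    show r + (-1 - r) = -1 by ring] at e
  have hh₁ := vh_mul_denom hε hθ hs'
  have hh₂ := vh_mul_denom hε hθ (hr.intCast_add 1)
  push_cast at hh₂
  have h1 : (1 : ℂ) + ε ≠ 0 := by simpa using hε 1
  refine mul_left_cancel₀ h1 ?_
  linear_combination 12 * ε * (1 - 2 * ε * r) * (1 + 2 * ε * (1 + r)) * e
    + 12 * ε * (1 + 2 * ε * (1 + r)) * σ r (-r) * hh₁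
    + 12 * ε * (1 - 2 * ε * r) * σ (-1 - r) (1 + r) * hh₂
    + (1 - 2 * ε * r) * (1 + 2 * ε * (1 + r)) * mul_inv_cancel₀ hε0

theorem SigmaSuperSymm.antidiag_one (hσ : SigmaSuperSymm θ σ) (hθ : θ = 0 ∨ θ = 1 / 2) {r : ℂ}
    (hr : InZT θ r) : 12 * (σ (1 + r) (-1 - r) + σ (-1 - r) (1 + r)) = 4 * (1 + r) ^ 2 - 1 := by
  have hs := hr.neg_one_sub hθ
  have e := hσ (1 + r) (-1 - r) (by exact_mod_cast hr.intCast_add 1) hs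
  rw [if_pos (by ring)] at e
  linear_combination 12 * e

theorem sigma_antidiag (hε : ∀ j : ℤ, 1 + ε * j ≠ 0) (hθ : θ = 0 ∨ θ = 1 / 2) (hε0 : ε ≠ 0)
    (hσ : SigmaSuperSymm θ σ) (h11 : CocycleLGG θ ε σ) (h12 : CocycleGGL θ ε σ) {r : ℂ}
    (hr : InZT θ r) : σ r (-r) = (1 / 24) * (4 * r ^ 2 - 1 + 2 * (ε - ε⁻¹) * r) := by
  have E1 := h11.antidiag_one hε hθ hε0 hr
  have E2 := h12.antidiag_one hε hθ hε0 hr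
  have E3 := hσ.antidiag_one hθ hr
  obtain ⟨j, hj⟩ := hr.exists_add_eq_intCast hθ hr
  have hD : 1 - 4 * ε * r * (1 + r) ≠ 0 := by
    convert hε (-(j * (j + 2))) using 1
    push_cast
    rw [← hj]
    ring
  refine mul_left_cancel₀ (mul_ne_zero (mul_ne_zero (by norm_num : (48 : ℂ) ≠ 0) hε0) hD) ?_
  linear_combination 2 * (1 - 2 * r) * (E2 - ε * (1 - 2 * ε * r) * E3) + E1
    + 4 * (1 - 4 * ε * r * (1 + r)) * r * mul_inv_cancel₀ hε0

end Sigma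

/-- uniqueness part of Theorem 4.2: if ψ, ρ, σ satisfy equations
(4.7)–(4.13) of the paper with f, g, h, d given by (3.4)–(3.5) and φ given by
(4.14), then ψ = ρ = 0 and σ(r,s) = (1/24)(4r²−1+2(ε−ε⁻¹)r)δ_{r+s,0}. -/
theorem central_extension_uniqueness (θ ε : ℂ) (hθ : θ = 0 ∨ θ = 1 / 2)
    (hε : (0 < ε.re ∧ ∀ k : ℤ, ε⁻¹ ≠ (k : ℂ)) ∨ (ε.re = 0 ∧ 0 < ε.im))
    (ψ ρ σ : ℂ → ℂ → ℂ)
    (hσsym : ∀ r s : ℂ, InZT θ r → InZT θ s →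
      σ r s + σ s r = (1 / 12) * (4 * r ^ 2 - 1) * (if r + s = 0 then 1 else 0))
    (hpr : ∀ (m : ℤ) (r : ℂ), InZT θ r → ψ m r = ρ r m)
    (h9 : ∀ (m n : ℤ) (r : ℂ), InZT θ r →
      ((m : ℂ) - (n : ℂ)) * ψ ((m : ℂ) + (n : ℂ)) r
        = vg ε n r * ψ m ((n : ℂ) + r) - vg ε m r * ψ n ((m : ℂ) + r))
    (h10 : ∀ (m n : ℤ) (r : ℂ), InZT θ r →
      ((m : ℂ) / 2 - r) * ρ ((m : ℂ) + r) n
        = vh ε r n * ψ m ((n : ℂ) + r) - vf ε m n * ρ r ((m : ℂ) + (n : ℂ)))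
    (h11 : ∀ (m : ℤ) (r s : ℂ), InZT θ r → InZT θ s →
      ((m : ℂ) / 2 - r) * σ ((m : ℂ) + r) s
        = vd ε r s * vphi ε m (r + s) - vg ε m s * σ r ((m : ℂ) + s))
    (h12 : ∀ (m : ℤ) (r s : ℂ), InZT θ r → InZT θ s →
      2 * vphi ε (r + s) m
        = vh ε s m * σ r ((m : ℂ) + s) + vh ε r m * σ s ((m : ℂ) + r))
    (h13 : ∀ r s t : ℂ, InZT θ r → InZT θ s → InZT θ t →
      2 * ψ (r + s) t = vd ε s t * ρ r (s + t) + vd ε r t * ρ s (r + t)) :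
    ∀ (m : ℤ) (r s : ℂ), InZT θ r → InZT θ s →
      ψ m r = 0 ∧ ρ r m = 0 ∧
      σ r s = (1 / 24) * (4 * r ^ 2 - 1 + 2 * (ε - ε⁻¹) * r) *
        (if r + s = 0 then 1 else 0) := by
  have hε0 := ne_zero_of_admissible hε
  have hne := one_add_mul_intCast_ne_zero hε
  intro m r s hr hs
  have hψ := psi_eq_zero hne hθ hpr h9 h10 h13 m hr
  refine ⟨hψ, hpr m r hr ▸ hψ, ?_⟩
  by_cases hrs : r + s = 0
  · rw [if_pos hrs, mul_one, eq_neg_of_add_eq_zero_right hrs]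
    exact sigma_antidiag hne hθ hε0 hσsym h11 h12 hr
  · rw [if_neg hrs, mul_zero]
    exact sigma_eq_zero_of_add_ne_zero hne hθ h11 hr hs hrs
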